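/- arXiv:1309.5441 — 6 statements merged into one kernel-verified Lean document; each statement's English description precedes it below -/
import Mathlib

section
/- For all real numbers x ≥ y ≥ 1, one has 0 ≤ log(x + √(x²−1)) − log(y + √(y²−1)) ≤ 2·√(x+y)·√(x−y). -/
theorem stmt2 (x y : ℝ) (hy : 1 ≤ y) (hxy : y ≤ x) :
    0 ≤ Real.log (x + Real.sqrt (x ^ 2 - 1)) - Real.log (y + Real.sqrt (y ^ 2 - 1)) ∧
      Real.log (x + Real.sqrt (x ^ 2 - 1)) - Real.log (y + Real.sqrt (y ^ 2 - 1)) ≤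
        2 * Real.sqrt (x + y) * Real.sqrt (x - y) := by
  have hx : (1:ℝ) ≤ x := le_trans hy hxy
  have hy2 : (0:ℝ) ≤ y ^ 2 - 1 := by nlinarith
  have hx2 : (0:ℝ) ≤ x ^ 2 - 1 := by nlinarith
  have hsy : 0 ≤ Real.sqrt (y ^ 2 - 1) := Real.sqrt_nonneg _
  have hsx : 0 ≤ Real.sqrt (x ^ 2 - 1) := Real.sqrt_nonneg _
  have hb : (1:ℝ) ≤ y + Real.sqrt (y ^ 2 - 1) := by linarith
  have hbpos : (0:ℝ) < y + Real.sqrt (y ^ 2 - 1) := by linarith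
  have hmono : Real.sqrt (y ^ 2 - 1) ≤ Real.sqrt (x ^ 2 - 1) := by
    apply Real.sqrt_le_sqrt; nlinarith
  have hab : y + Real.sqrt (y ^ 2 - 1) ≤ x + Real.sqrt (x ^ 2 - 1) := by linarith
  have hapos : (0:ℝ) < x + Real.sqrt (x ^ 2 - 1) := lt_of_lt_of_le hbpos hab
  have hlow : 0 ≤ Real.log (x + Real.sqrt (x ^ 2 - 1)) - Real.log (y + Real.sqrt (y ^ 2 - 1)) := by
    have := Real.log_le_log hbpos hab
    linarith
  refine ⟨hlow, ?_⟩
  -- log a - log b = log (a/b) ≤ a/b - 1 ≤ a - b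
  have hdiv : Real.log (x + Real.sqrt (x ^ 2 - 1)) - Real.log (y + Real.sqrt (y ^ 2 - 1)) =
      Real.log ((x + Real.sqrt (x ^ 2 - 1)) / (y + Real.sqrt (y ^ 2 - 1))) := by
    rw [Real.log_div (ne_of_gt hapos) (ne_of_gt hbpos)]
  have hquot : (0:ℝ) < (x + Real.sqrt (x ^ 2 - 1)) / (y + Real.sqrt (y ^ 2 - 1)) :=
    div_pos hapos hbpos
  have h1 : Real.log ((x + Real.sqrt (x ^ 2 - 1)) / (y + Real.sqrt (y ^ 2 - 1))) ≤
      (x + Real.sqrt (x ^ 2 - 1)) / (y + Real.sqrt (y ^ 2 - 1)) - 1 :=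
    Real.log_le_sub_one_of_pos hquot
  have h2 : (x + Real.sqrt (x ^ 2 - 1)) / (y + Real.sqrt (y ^ 2 - 1)) - 1 ≤
      (x + Real.sqrt (x ^ 2 - 1)) - (y + Real.sqrt (y ^ 2 - 1)) := by
    rw [div_sub_one (ne_of_gt hbpos), div_le_iff₀ hbpos]
    nlinarith
  -- now bound a - b
  have hxy0 : (0:ℝ) ≤ x - y := by linarith
  have hxy1 : (0:ℝ) ≤ x + y := by linarith
  have hmul : Real.sqrt (x ^ 2 - y ^ 2) = Real.sqrt (x + y) * Real.sqrt (x - y) := by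
    rw [← Real.sqrt_mul hxy1]; ring_nf
  have hA : x - y ≤ Real.sqrt (x + y) * Real.sqrt (x - y) := by
    have h3 : Real.sqrt (x - y) ≤ Real.sqrt (x + y) := by
      apply Real.sqrt_le_sqrt; linarith
    have h4 : Real.sqrt (x - y) * Real.sqrt (x - y) = x - y := Real.mul_self_sqrt hxy0
    nlinarith [Real.sqrt_nonneg (x - y)]
  have hB : Real.sqrt (x ^ 2 - 1) - Real.sqrt (y ^ 2 - 1) ≤ Real.sqrt (x + y) * Real.sqrt (x - y) := by
    rw [← hmul]
    have h5 : Real.sqrt (x ^ 2 - 1) ≤ Real.sqrt (y ^ 2 - 1) + Real.sqrt (x ^ 2 - y ^ 2) := by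
      have h6 : x ^ 2 - 1 ≤ (Real.sqrt (y ^ 2 - 1) + Real.sqrt (x ^ 2 - y ^ 2)) ^ 2 := by
        have e1 : Real.sqrt (y ^ 2 - 1) ^ 2 = y ^ 2 - 1 := Real.sq_sqrt hy2
        have e2 : Real.sqrt (x ^ 2 - y ^ 2) ^ 2 = x ^ 2 - y ^ 2 := Real.sq_sqrt (by nlinarith)
        nlinarith [Real.sqrt_nonneg (x ^ 2 - y ^ 2)]
      calc Real.sqrt (x ^ 2 - 1) ≤ Real.sqrt ((Real.sqrt (y ^ 2 - 1) + Real.sqrt (x ^ 2 - y ^ 2)) ^ 2) :=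
            Real.sqrt_le_sqrt h6
        _ = Real.sqrt (y ^ 2 - 1) + Real.sqrt (x ^ 2 - y ^ 2) :=
            Real.sqrt_sq (by positivity)
    linarith
  linarith [hdiv ▸ (le_trans h1 h2)]
end

section
/- For all real numbers a, b > 0 and x, y ≥ 0, one has |a/√(a+x) − b/√(b+y)| ≤ |a−b|^{1/2} + |x−y|^{1/2}. -/
open Real

private lemma helper1 (a b x : ℝ) (hb : 0 < b) (hab : b ≤ a) (hx : 0 ≤ x) :
    0 ≤ a / Real.sqrt (a + x) - b / Real.sqrt (b + x) ∧
      a / Real.sqrt (a + x) - b / Real.sqrt (b + x) ≤ Real.sqrt (a - b) := by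
  have ha : 0 < a := lt_of_lt_of_le hb hab
  have hu : 0 < Real.sqrt (a + x) := Real.sqrt_pos.mpr (by linarith)
  have hv : 0 < Real.sqrt (b + x) := Real.sqrt_pos.mpr (by linarith)
  have hu2 : Real.sqrt (a + x) * Real.sqrt (a + x) = a + x :=
    Real.mul_self_sqrt (by linarith)
  have hv2 : Real.sqrt (b + x) * Real.sqrt (b + x) = b + x :=
    Real.mul_self_sqrt (by linarith)
  have hvu : Real.sqrt (b + x) ≤ Real.sqrt (a + x) := Real.sqrt_le_sqrt (by linarith)
  constructor
  · have : b / Real.sqrt (b + x) ≤ a / Real.sqrt (a + x) := by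
      rw [div_le_div_iff₀ hv hu]
      nlinarith [mul_pos hu hv, Real.sqrt_nonneg (a + x), Real.sqrt_nonneg (b + x)]
    linarith
  · have h1 : b / Real.sqrt (a + x) ≤ b / Real.sqrt (b + x) :=
      div_le_div_of_nonneg_left hb.le hv hvu
    have hsab : Real.sqrt (a - b) ≤ Real.sqrt (a + x) := Real.sqrt_le_sqrt (by linarith)
    have hmul : Real.sqrt (a - b) * Real.sqrt (a - b) = a - b :=
      Real.mul_self_sqrt (by linarith)
    have h2 : (a - b) / Real.sqrt (a + x) ≤ Real.sqrt (a - b) := by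
      rw [div_le_iff₀ hu]
      nlinarith [Real.sqrt_nonneg (a - b)]
    rw [sub_div] at h2
    linarith

private lemma helper2 (b x y : ℝ) (hb : 0 < b) (hx : 0 ≤ x) (hxy : x ≤ y) :
    0 ≤ b / Real.sqrt (b + x) - b / Real.sqrt (b + y) ∧
      b / Real.sqrt (b + x) - b / Real.sqrt (b + y) ≤ Real.sqrt (y - x) := by
  have hu : 0 < Real.sqrt (b + x) := Real.sqrt_pos.mpr (by linarith)
  have hv : 0 < Real.sqrt (b + y) := Real.sqrt_pos.mpr (by linarith)
  have hu2 : Real.sqrt (b + x) * Real.sqrt (b + x) = b + x :=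
    Real.mul_self_sqrt (by linarith)
  have hv2 : Real.sqrt (b + y) * Real.sqrt (b + y) = b + y :=
    Real.mul_self_sqrt (by linarith)
  have huv : Real.sqrt (b + x) ≤ Real.sqrt (b + y) := Real.sqrt_le_sqrt (by linarith)
  have hsb1 : Real.sqrt b ≤ Real.sqrt (b + x) := Real.sqrt_le_sqrt (by linarith)
  have hsb2 : Real.sqrt b ≤ Real.sqrt (b + y) := Real.sqrt_le_sqrt (by linarith)
  have hsb : Real.sqrt b * Real.sqrt b = b := Real.mul_self_sqrt hb.le
  have hbuv : b ≤ Real.sqrt (b + x) * Real.sqrt (b + y) := by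
    nlinarith [Real.sqrt_nonneg b]
  constructor
  · have : b / Real.sqrt (b + y) ≤ b / Real.sqrt (b + x) :=
      div_le_div_of_nonneg_left hb.le hu huv
    linarith
  · have step1 : b / Real.sqrt (b + x) - b / Real.sqrt (b + y) ≤
        Real.sqrt (b + y) - Real.sqrt (b + x) := by
      rw [div_sub_div _ _ hu.ne' hv.ne', div_le_iff₀ (mul_pos hu hv)]
      nlinarith [mul_nonneg (sub_nonneg.mpr huv) (sub_nonneg.mpr hbuv)]
    have hs : Real.sqrt (y - x) * Real.sqrt (y - x) = y - x :=
      Real.mul_self_sqrt (by linarith)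
    have step2 : Real.sqrt (b + y) ≤ Real.sqrt (b + x) + Real.sqrt (y - x) := by
      have h : b + y ≤ (Real.sqrt (b + x) + Real.sqrt (y - x)) ^ 2 := by
        nlinarith [mul_nonneg hu.le (Real.sqrt_nonneg (y - x))]
      calc Real.sqrt (b + y) ≤ Real.sqrt ((Real.sqrt (b + x) + Real.sqrt (y - x)) ^ 2) :=
            Real.sqrt_le_sqrt h
        _ = Real.sqrt (b + x) + Real.sqrt (y - x) :=
            Real.sqrt_sq (by positivity)
    linarith

private lemma L1 (a b x : ℝ) (ha : 0 < a) (hb : 0 < b) (hx : 0 ≤ x) :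
    |a / Real.sqrt (a + x) - b / Real.sqrt (b + x)| ≤ Real.sqrt |a - b| := by
  rcases le_total b a with hab | hab
  · obtain ⟨h0, h1⟩ := helper1 a b x hb hab hx
    rw [abs_of_nonneg h0, abs_of_nonneg (by linarith : (0:ℝ) ≤ a - b)]
    exact h1
  · obtain ⟨h0, h1⟩ := helper1 b a x ha hab hx
    rw [abs_sub_comm, abs_of_nonneg h0, abs_sub_comm,
      abs_of_nonneg (by linarith : (0:ℝ) ≤ b - a)]
    exact h1

private lemma L2 (b x y : ℝ) (hb : 0 < b) (hx : 0 ≤ x) (hy : 0 ≤ y) :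
    |b / Real.sqrt (b + x) - b / Real.sqrt (b + y)| ≤ Real.sqrt |x - y| := by
  rcases le_total x y with hxy | hxy
  · obtain ⟨h0, h1⟩ := helper2 b x y hb hx hxy
    rw [abs_of_nonneg h0, abs_sub_comm, abs_of_nonneg (by linarith : (0:ℝ) ≤ y - x)]
    exact h1
  · obtain ⟨h0, h1⟩ := helper2 b y x hb hy hxy
    rw [abs_sub_comm, abs_of_nonneg h0, abs_of_nonneg (by linarith : (0:ℝ) ≤ x - y)]
    exact h1

theorem stmt3 (a b x y : ℝ) (ha : 0 < a) (hb : 0 < b) (hx : 0 ≤ x) (hy : 0 ≤ y) :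
    |a / Real.sqrt (a + x) - b / Real.sqrt (b + y)| ≤
      Real.sqrt |a - b| + Real.sqrt |x - y| := by
  calc |a / Real.sqrt (a + x) - b / Real.sqrt (b + y)|
      ≤ |a / Real.sqrt (a + x) - b / Real.sqrt (b + x)| +
        |b / Real.sqrt (b + x) - b / Real.sqrt (b + y)| :=
        abs_sub_le _ _ _
    _ ≤ Real.sqrt |a - b| + Real.sqrt |x - y| :=
        add_le_add (L1 a b x ha hb hx) (L2 b x y hb hx hy)
end

section
/- Let N ≥ 3 and M ≥ 1 be integers with M < N − M. Then for all integers n, k with M < n, k < N − M and k ≠ n, one has |cos(nπ/N) − cos(kπ/N)| ≥ (M/N)·(π/N). -/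
open Real

set_option maxHeartbeats 1000000 in
theorem stmt4 (N M n k : ℕ) (hN : 3 ≤ N) (hM : 1 ≤ M) (hMN : M < N - M)
    (hn1 : M < n) (hn2 : n < N - M) (hk1 : M < k) (hk2 : k < N - M) (hnk : k ≠ n) :
    (M : ℝ) / N * (Real.pi / N) ≤
      |Real.cos (n * Real.pi / N) - Real.cos (k * Real.pi / N)| := by
  have h2M : 2 * M < N := by omega
  have hnN : n + M < N := by omega
  have hkN : k + M < N := by omega
  have hπ := Real.pi_pos
  have hNR : (0:ℝ) < N := by exact_mod_cast (by omega : 0 < N)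
  have hMR : (1:ℝ) ≤ M := by exact_mod_cast hM
  have hnR : (M:ℝ) < n := by exact_mod_cast hn1
  have hkR : (M:ℝ) < k := by exact_mod_cast hk1
  have hnNR : (n:ℝ) + M < N := by exact_mod_cast hnN
  have hkNR : (k:ℝ) + M < N := by exact_mod_cast hkN
  set s : ℝ := ((n:ℝ) + k) * π / (2 * N) with hsdef
  set t : ℝ := ((n:ℝ) - k) * π / (2 * N) with htdef
  clear_value s t
  have h1 : ((n:ℝ) * π / N + k * π / N) / 2 = s := by
    rw [hsdef]; field_simp
  have h2 : ((n:ℝ) * π / N - k * π / N) / 2 = t := by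
    rw [htdef]; field_simp
  have hcos : Real.cos (n * π / N) - Real.cos (k * π / N) = -2 * Real.sin s * Real.sin t := by
    rw [Real.cos_sub_cos, h1, h2]
  -- bounds on s
  have hs_lb : (M:ℝ) * π / N ≤ s := by
    rw [hsdef]
    rw [div_le_div_iff₀ hNR (by positivity)]
    have h5 : 2 * (M:ℝ) * π ≤ ((n:ℝ) + k) * π :=
      mul_le_mul_of_nonneg_right (by linarith) hπ.le
    nlinarith [mul_le_mul_of_nonneg_right h5 hNR.le]
  have hs_ub : s ≤ π - (M:ℝ) * π / N := by
    rw [hsdef, div_le_iff₀ (by positivity)]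
    have hdiv : ((M:ℝ) * π / N) * (2 * N) = 2 * M * π := by field_simp
    have hn' : (n:ℝ) + M + 1 ≤ N := by exact_mod_cast hnN
    have hk' : (k:ℝ) + M + 1 ≤ N := by exact_mod_cast hkN
    have h5 : ((n:ℝ) + k) * π ≤ (2 * N - 2 * M - 2) * π :=
      mul_le_mul_of_nonneg_right (by linarith) hπ.le
    nlinarith [hdiv, h5]
  have hM_half : (M:ℝ) * π / N ≤ π / 2 := by
    rw [div_le_div_iff₀ hNR two_pos]
    nlinarith [(by exact_mod_cast h2M : 2 * (M:ℝ) < N)]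
  have hM_pos : 0 ≤ (M:ℝ) * π / N := by positivity
  -- sin s ≥ 2M/N
  have hsin_s : 2 * M / N ≤ Real.sin s := by
    have key : ∀ x : ℝ, (M:ℝ) * π / N ≤ x → x ≤ π / 2 → 2 * M / N ≤ Real.sin x := by
      intro x hx1 hx2
      have := Real.mul_le_sin (le_trans hM_pos hx1) hx2
      have h3 : 2 / π * ((M:ℝ) * π / N) ≤ 2 / π * x := by
        apply mul_le_mul_of_nonneg_left hx1 (by positivity)
      calc 2 * (M:ℝ) / N = 2 / π * ((M:ℝ) * π / N) := by field_simp
        _ ≤ 2 / π * x := h3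
        _ ≤ Real.sin x := this
    rcases le_or_gt s (π / 2) with h | h
    · exact key s hs_lb h
    · rw [← Real.sin_pi_sub]
      exact key (π - s) (by linarith) (by linarith)
  -- |sin t| ≥ 1/N
  have htabs : |t| = |(n:ℝ) - k| * π / (2 * N) := by
    rw [htdef, abs_div, abs_mul, abs_of_pos hπ, abs_of_pos (by positivity : (0:ℝ) < 2 * N)]
  have hnk1 : (1:ℝ) ≤ |(n:ℝ) - k| := by
    have : (n:ℝ) - k ≠ 0 := by
      intro h; apply hnk; exact_mod_cast (by linarith : (k:ℝ) = n)
    have h' : ((n:ℝ) - k) = ((n:ℤ) - k : ℤ) := by push_cast; ring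
    rw [h']
    exact_mod_cast Int.one_le_abs (by exact_mod_cast fun h => this (by rw [h']; exact_mod_cast h) : (n:ℤ) - k ≠ 0)
  have hnkN : |(n:ℝ) - k| ≤ N := by
    have h0n : (0:ℝ) ≤ n := Nat.cast_nonneg n
    have h0k : (0:ℝ) ≤ k := Nat.cast_nonneg k
    rw [abs_le]
    constructor
    · linarith
    · linarith
  have ht_lb : π / (2 * N) ≤ |t| := by
    have h6 : π / (2 * N) = 1 * π / (2 * N) := by ring
    rw [htabs, h6]
    gcongr
  have ht_ub : |t| ≤ π / 2 := by
    have h6 : π / 2 = (N:ℝ) * π / (2 * N) := by field_simp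
    rw [htabs, h6]
    gcongr
  have hsin_t : 1 / N ≤ |Real.sin t| := by
    have h0 : |Real.sin t| = Real.sin |t| := by
      rcases le_or_gt 0 t with h | h
      · rw [abs_of_nonneg h,
          abs_of_nonneg (Real.sin_nonneg_of_nonneg_of_le_pi h (by rw [abs_of_nonneg h] at ht_ub; linarith))]
      · have hsn : Real.sin t = -Real.sin (-t) := by rw [Real.sin_neg]; ring
        rw [abs_of_neg h, hsn, abs_neg,
          abs_of_nonneg (Real.sin_nonneg_of_nonneg_of_le_pi (by linarith)
            (by rw [abs_of_neg h] at ht_ub; linarith))]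
    rw [h0]
    have := Real.mul_le_sin (abs_nonneg t) ht_ub
    have h3 : 2 / π * (π / (2 * N)) ≤ 2 / π * |t| :=
      mul_le_mul_of_nonneg_left ht_lb (by positivity)
    calc (1:ℝ) / N = 2 / π * (π / (2 * N)) := by field_simp
      _ ≤ 2 / π * |t| := h3
      _ ≤ Real.sin |t| := this
  have hss : (0:ℝ) ≤ Real.sin s := by
    have : (0:ℝ) ≤ 2 * M / N := by positivity
    linarith
  have h2abs : |(-2:ℝ)| = 2 := by norm_num
  rw [hcos, abs_mul, abs_mul, h2abs, abs_of_nonneg hss]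
  have hkey : 2 * (2 * M / N) * (1 / N) ≤ 2 * Real.sin s * |Real.sin t| := by
    have h1 : (0:ℝ) ≤ 2 * M / N := by positivity
    nlinarith [abs_nonneg (Real.sin t)]
  have hfin : (M:ℝ) / N * (π / N) ≤ 2 * (2 * M / N) * (1 / N) := by
    rw [div_mul_div_comm]
    rw [div_le_iff₀ (by positivity)]
    have he : 2 * (2 * (M:ℝ) / N) * (1 / N) * (N * N) = 4 * M := by
      field_simp; ring
    have hp : (M:ℝ) * π ≤ (M:ℝ) * 4 :=
      mul_le_mul_of_nonneg_left Real.pi_le_four (Nat.cast_nonneg M)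
    linarith
  linarith
end

section
/- Let Q(b,a) be the 2N × 2N periodic Jacobi matrix with diagonal entries b₁,…,b_N, b₁,…,b_N, off-diagonal entries a₁,…,a_N, a₁,…,a_N (periodically coupled). Define b̃_n = −b_{N−n} and ã_n = a_{N−1−n} (indices mod N). Then λ is an eigenvalue of Q(b,a) with eigenvector (F_n)_{1≤n≤2N} if and only if −λ is an eigenvalue of Q(b̃,ã) with eigenvector ((−1)ⁿ F_{2N−n})_{1≤n≤2N}. -/
theorem stmt10 (N : ℕ) (hN : 2 ≤ N) (b a : ℤ → ℝ)
    (hb : ∀ m : ℤ, b (m + N) = b m) (ha : ∀ m : ℤ, a (m + N) = a m)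
    (lam : ℝ) (F : ℤ → ℝ) (hF : ∀ m : ℤ, F (m + 2 * N) = F m) :
    ((F ≠ 0) ∧
        ∀ m : ℤ, a (m - 1) * F (m - 1) + b m * F m + a m * F (m + 1) = lam * F m) ↔
      (((fun m : ℤ => (-1 : ℝ) ^ m * F (2 * N - m)) ≠ 0) ∧
        ∀ m : ℤ,
          a ((N : ℤ) - 1 - (m - 1)) * ((-1 : ℝ) ^ (m - 1) * F (2 * N - (m - 1))) +
              (-b ((N : ℤ) - m)) * ((-1 : ℝ) ^ m * F (2 * N - m)) +
              a ((N : ℤ) - 1 - m) * ((-1 : ℝ) ^ (m + 1) * F (2 * N - (m + 1))) =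
            (-lam) * ((-1 : ℝ) ^ m * F (2 * N - m))) := by
  have hne : ∀ m : ℤ, ((-1 : ℝ) ^ m) ≠ 0 := fun m => zpow_ne_zero m (by norm_num)
  have hsq : ∀ m : ℤ, ((-1 : ℝ) ^ m) * ((-1 : ℝ) ^ m) = 1 := by
    intro m
    rw [← zpow_add₀ (by norm_num : (-1:ℝ) ≠ 0)]
    rw [show m + m = 2 * m by ring, zpow_mul]
    norm_num
  have hp1 : ∀ m : ℤ, ((-1 : ℝ) ^ (m - 1)) = -((-1 : ℝ) ^ m) := by
    intro m
    rw [zpow_sub₀ (by norm_num : (-1:ℝ) ≠ 0)]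
    norm_num
    ring
  have hp2 : ∀ m : ℤ, ((-1 : ℝ) ^ (m + 1)) = -((-1 : ℝ) ^ m) := by
    intro m
    rw [zpow_add₀ (by norm_num : (-1:ℝ) ≠ 0)]
    norm_num
  constructor
  · rintro ⟨hF0, heq⟩
    constructor
    · intro h
      apply hF0
      funext m
      have h2 := congrFun h (2 * N - m)
      simp only [Pi.zero_apply] at h2
      rw [show (2 * (N:ℤ) - (2 * N - m)) = m by ring] at h2
      rcases mul_eq_zero.1 h2 with h3 | h3
      · exact absurd h3 (hne _)
      · exact h3
    · intro m
      have h1 := heq (2 * N - m)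
      have key : ∀ x y : ℤ, x + N = y → a y = a x := fun x y h => h ▸ ha x
      have keyb : ∀ x y : ℤ, x + N = y → b y = b x := fun x y h => h ▸ hb x
      have eqa1 : a ((N:ℤ) - 1 - (m - 1)) = a (2 * N - m) :=
        (key ((N:ℤ) - 1 - (m - 1)) (2 * N - m) (by ring)).symm
      have eqa2 : a ((N:ℤ) - 1 - m) = a (2 * N - m - 1) :=
        (key ((N:ℤ) - 1 - m) (2 * N - m - 1) (by ring)).symm
      have eqb : b ((N:ℤ) - m) = b (2 * N - m) :=
        (keyb ((N:ℤ) - m) (2 * N - m) (by ring)).symm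
      rw [eqa1, eqa2, eqb, hp1, hp2,
          show (2 * (N:ℤ) - (m - 1)) = 2 * N - m + 1 by ring,
          show (2 * (N:ℤ) - (m + 1)) = 2 * N - m - 1 by ring]
      linear_combination (-((-1:ℝ) ^ m)) * h1
  · rintro ⟨hG0, heq⟩
    constructor
    · intro h
      apply hG0
      funext m
      simp [h]
    · intro m
      have h1 := heq (2 * N - m)
      rw [show ((N:ℤ) - 1 - (2 * N - m - 1)) = (m - N) by ring,
          show (2 * (N:ℤ) - (2 * N - m - 1)) = m + 1 by ring,
          show ((N:ℤ) - (2 * N - m)) = m - N by ring,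
          show (2 * (N:ℤ) - (2 * N - m)) = m by ring,
          show ((N:ℤ) - 1 - (2 * N - m)) = (m - 1) - N by ring,
          show (2 * (N:ℤ) - (2 * N - m + 1)) = m - 1 by ring] at h1
      have ea : a (m - N) = a m := by
        have := ha (m - N); rw [show (m - (N:ℤ) + N) = m by ring] at this
        exact this.symm
      have ea' : a (m - 1 - N) = a (m - 1) := by
        have := ha (m - 1 - N); rw [show (m - 1 - (N:ℤ) + N) = m - 1 by ring] at this
        exact this.symm
      have eb : b (m - N) = b m := by
        have := hb (m - N); rw [show (m - (N:ℤ) + N) = m by ring] at this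
        exact this.symm
      rw [ea, ea', eb, hp1, hp2] at h1
      set E := ((-1:ℝ) ^ (2 * (N:ℤ) - m)) with hE
      have hsqE : E * E = 1 := hsq _
      linear_combination (-E) * h1 - (a (m - 1) * F (m - 1) + b m * F m + a m * F (m + 1) - lam * F m) * hsqE
end

section
/- With the notation of the Toda chain symmetry: if the eigenvalues of Q(b,a), listed in increasing order with multiplicities, are λ₀ ≤ λ₁ ≤ ⋯ ≤ λ_{2N−1}, then the eigenvalues of Q(b̃,ã), listed in increasing order, satisfy λ̃_n = −λ_{2N−1−n} for all 0 ≤ n ≤ 2N−1; consequently the characteristic polynomials satisfy χ̃_N(μ) = χ_N(−μ). -/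
/-!
For `c : ZMod (2N)` (here `c = N`) let `S` have entries `S i (c - i) = (-1) ^ i`, zeros elsewhere.
Since `2N` is even the sign `(-1) ^ i` is well defined on `ZMod (2N)`, `S` is orthogonal, and
conjugating `-Q(b, a)` by `S` reverses the indices (`i ↦ c - i`) while the signs of neighbouring
indices, being opposite, restore the off-diagonal entries: the result is `Q(b̃, ã)`. Hence
`χ̃(μ) = det(μ + Q) = χ(-μ)` because the dimension is even, and the ordered roots of `χ(-μ)` are
`-λ_{2N-1-n}`.
-/

open Polynomial

/-- The `2N × 2N` periodic Jacobi matrix built from diagonal `b` and off-diagonal `a`. -/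
def JacobiQ (N : ℕ) (b a : ZMod (2 * N) → ℝ) : Matrix (ZMod (2 * N)) (ZMod (2 * N)) ℝ :=
  fun i j =>
    (if j = i then b i else 0) + (if j = i + 1 then a i else 0) +
      (if i = j + 1 then a j else 0)

open scoped Matrix

namespace Matrix

variable {n R : Type*} [DecidableEq n] [Fintype n] [CommRing R]

theorem charpoly_conj_of_mul_eq_one {U V : Matrix n n R} (hUV : U * V = 1) (M : Matrix n n R) :
    (U * M * V).charpoly = M.charpoly := by
  rw [charpoly_mul_comm, ← mul_assoc, mul_eq_one_comm.mp hUV, one_mul]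

theorem charpoly_neg (M : Matrix n n R) :
    (-M).charpoly = (-1) ^ Fintype.card n * M.charpoly.comp (-X) := by
  have hmap : (charmatrix M).map (aeval (-X : R[X])) = -charmatrix (-M) := by
    ext i j : 1
    by_cases hij : i = j
    · subst hij
      simp only [map_apply, charmatrix_apply_eq, neg_apply, aeval_sub, aeval_X, aeval_C,
        algebraMap_eq, map_neg]
      ring
    · simp [hij]
  rw [comp_eq_aeval, charpoly, charpoly, AlgHom.map_det, AlgHom.mapMatrix_apply, hmap, det_neg,
    ← mul_assoc, ← mul_pow, neg_one_mul, neg_neg, one_pow, one_mul]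

end Matrix

theorem Polynomial.prod_X_sub_C_comp_neg_X {R : Type*} [CommRing R] {n : ℕ} (f : Fin n → R) :
    (∏ k, (X - C (f k))).comp (-X) = (-1) ^ n * ∏ k, (X - C (-f (Fin.rev k))) := by
  calc (∏ k, (X - C (f k))).comp (-X) = ∏ k, (-1) * (X - C (-f k)) := by
        rw [prod_comp]
        exact Finset.prod_congr rfl fun k _ => by
          simp only [sub_comp, X_comp, C_comp, map_neg]; ring
    _ = (-1) ^ n * ∏ k, (X - C (-f k)) := by
        rw [Finset.prod_mul_distrib, Finset.prod_const, Finset.card_univ, Fintype.card_fin]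
    _ = (-1) ^ n * ∏ k, (X - C (-f (Fin.rev k))) := by
        rw [← Fintype.prod_equiv Fin.revPerm _ _ fun _ => rfl]; rfl

theorem Monotone.eq_of_prod_X_sub_C_eq {R : Type*} [CommRing R] [IsDomain R] [LinearOrder R]
    {n : ℕ} {f g : Fin n → R} (hf : Monotone f) (hg : Monotone g)
    (h : ∏ k, (X - C (f k)) = ∏ k, (X - C (g k))) : f = g := by
  have hroots (u : Fin n → R) : (∏ k, (X - C (u k))).roots = (List.ofFn u : Multiset R) := by
    have := roots_multiset_prod_X_sub_C (Finset.univ.val.map u)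
    rwa [Multiset.map_map, ← Finset.prod_eq_multiset_prod, Fin.univ_val_map] at this
  have hperm : (List.ofFn f).Perm (List.ofFn g) := by
    simpa only [hroots, Multiset.coe_eq_coe] using congrArg roots h
  exact List.ofFn_injective (hperm.eq_of_sortedLE hf.sortedLE_ofFn hg.sortedLE_ofFn)

noncomputable def altSign {n : ℕ} (i : ZMod n) : ℝ := (-1) ^ i.val

theorem altSign_mul_self {n : ℕ} (i : ZMod n) : altSign i * altSign i = 1 := by
  rw [altSign, ← pow_add, Even.neg_one_pow ⟨i.val, rfl⟩]

theorem altSign_add_one {n : ℕ} [NeZero n] (hn : Even n) (i : ZMod n) :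
    altSign (i + 1) = -altSign i := by
  have : Fact (1 < n) := ⟨by obtain ⟨k, rfl⟩ := hn; have := NeZero.ne (k + k); omega⟩
  rw [altSign, altSign, ZMod.val_add, ZMod.val_one, neg_one_pow_eq_pow_mod_two,
    Nat.mod_mod_of_dvd _ (even_iff_two_dvd.mp hn), ← neg_one_pow_eq_pow_mod_two, pow_succ,
    mul_neg_one]

section SignedReflection

variable {n : ℕ} [NeZero n]

noncomputable def signedReflection (c : ZMod n) : Matrix (ZMod n) (ZMod n) ℝ :=
  Matrix.of fun i j => if j = c - i then altSign i else 0

theorem signedReflection_conj_apply (c : ZMod n) (M : Matrix (ZMod n) (ZMod n) ℝ)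
    (i j : ZMod n) :
    (signedReflection c * M * (signedReflection c)ᵀ) i j =
      altSign i * altSign j * M (c - i) (c - j) := by
  simp only [Matrix.mul_apply, Matrix.transpose_apply, signedReflection, Matrix.of_apply, ite_mul,
    mul_ite, zero_mul, mul_zero, Finset.sum_ite_eq', Finset.mem_univ, if_true]
  ring

theorem signedReflection_mul_transpose (c : ZMod n) :
    signedReflection c * (signedReflection c)ᵀ = 1 := by
  ext i j
  have := signedReflection_conj_apply c 1 i j
  rw [Matrix.mul_one] at this
  simp only [this, Matrix.one_apply, sub_right_inj]
  split_ifs with h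
  · subst h; rw [mul_one, altSign_mul_self]
  · rw [mul_zero]

end SignedReflection

theorem JacobiQ_reflect (N : ℕ) [NeZero (2 * N)] (c : ZMod (2 * N)) (b a : ZMod (2 * N) → ℝ) :
    JacobiQ N (fun i => -b (c - i)) (fun i => a (c - 1 - i)) =
      signedReflection c * -JacobiQ N b a * (signedReflection c)ᵀ := by
  ext i j
  have hsign := altSign_add_one (even_two_mul N)
  have hup : c - j = c - i + 1 ↔ i = j + 1 :=
    ⟨fun h => by linear_combination h, fun h => by linear_combination h⟩
  have hdown : c - i = c - j + 1 ↔ j = i + 1 :=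
    ⟨fun h => by linear_combination h, fun h => by linear_combination h⟩
  rw [signedReflection_conj_apply]
  simp only [JacobiQ, Matrix.neg_apply, sub_right_inj, hup, hdown]
  have hdiag : (if j = i then -b (c - i) else 0) =
      -(altSign i * altSign j * if j = i then b (c - i) else 0) := by
    split_ifs with h
    · subst h; rw [altSign_mul_self]; ring
    · ring
  have hsuper : (if j = i + 1 then a (c - 1 - i) else 0) =
      -(altSign i * altSign j * if j = i + 1 then a (c - j) else 0) := by
    split_ifs with h
    · subst h; rw [hsign, sub_sub, add_comm 1 i, mul_neg, altSign_mul_self]; ring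
    · ring
  have hsub : (if i = j + 1 then a (c - 1 - j) else 0) =
      -(altSign i * altSign j * if i = j + 1 then a (c - i) else 0) := by
    split_ifs with h
    · subst h; rw [hsign, sub_sub, add_comm 1 j, neg_mul, altSign_mul_self]; ring
    · ring
  rw [hdiag, hsuper, hsub]
  ring

theorem JacobiQ_reflect_charpoly (N : ℕ) [NeZero (2 * N)] (c : ZMod (2 * N))
    (b a : ZMod (2 * N) → ℝ) :
    (JacobiQ N (fun i => -b (c - i)) (fun i => a (c - 1 - i))).charpoly =
      (JacobiQ N b a).charpoly.comp (-X) := by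
  rw [JacobiQ_reflect, Matrix.charpoly_conj_of_mul_eq_one (signedReflection_mul_transpose c),
    Matrix.charpoly_neg, ZMod.card, (even_two_mul N).neg_one_pow, one_mul]

theorem stmt11_general (N : ℕ) [NeZero (2 * N)]
    (b a : ZMod (2 * N) → ℝ)
    (lam lamt : Fin (2 * N) → ℝ) (hmono : Monotone lam) (hmonot : Monotone lamt)
    (hchar : (JacobiQ N b a).charpoly = ∏ k : Fin (2 * N), (X - C (lam k)))
    (hchart : (JacobiQ N (fun i => -b ((N : ZMod (2 * N)) - i))
          (fun i => a ((N : ZMod (2 * N)) - 1 - i))).charpoly =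
        ∏ k : Fin (2 * N), (X - C (lamt k))) :
    (∀ n : Fin (2 * N), lamt n = -lam n.rev) ∧
      (JacobiQ N (fun i => -b ((N : ZMod (2 * N)) - i))
          (fun i => a ((N : ZMod (2 * N)) - 1 - i))).charpoly =
        (JacobiQ N b a).charpoly.comp (-X) := by
  have hcharpoly := JacobiQ_reflect_charpoly N N b a
  have hprod : ∏ k, (X - C (lamt k)) = ∏ k, (X - C (-lam (Fin.rev k))) := by
    rw [← hchart, hcharpoly, hchar, prod_X_sub_C_comp_neg_X, (even_two_mul N).neg_one_pow, one_mul]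
  have hsorted := hmonot.eq_of_prod_X_sub_C_eq ((hmono.comp_antitone Fin.rev_anti).neg) hprod
  exact ⟨congrFun hsorted, hcharpoly⟩

theorem stmt11 (N : ℕ) [NeZero (2 * N)] (hN : 2 ≤ N)
    (b a : ZMod (2 * N) → ℝ)
    (hb : ∀ i, b (i + (N : ZMod (2 * N))) = b i)
    (ha : ∀ i, a (i + (N : ZMod (2 * N))) = a i)
    (lam lamt : Fin (2 * N) → ℝ) (hmono : Monotone lam) (hmonot : Monotone lamt)
    (hchar : (JacobiQ N b a).charpoly = ∏ k : Fin (2 * N), (X - C (lam k)))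
    (hchart : (JacobiQ N (fun i => -b ((N : ZMod (2 * N)) - i))
          (fun i => a ((N : ZMod (2 * N)) - 1 - i))).charpoly =
        ∏ k : Fin (2 * N), (X - C (lamt k))) :
    (∀ n : Fin (2 * N), lamt n = -lam n.rev) ∧
      (JacobiQ N (fun i => -b ((N : ZMod (2 * N)) - i))
          (fun i => a ((N : ZMod (2 * N)) - 1 - i))).charpoly =
        (JacobiQ N b a).charpoly.comp (-X) :=
  stmt11_general N b a lam lamt hmono hmonot hchar hchart
end

section
/- Let (γ_ℓ)_{ℓ≥1} be a sequence of nonnegative reals with ∑_{ℓ≥1} (ℓ²γ_ℓ)² < ∞. Then for every L ≥ 1 the sum ∑_{ℓ > L} γ_ℓ/(ℓ² − L²) converges and there is a constant C (depending only on ∑ (ℓ²γ_ℓ)²) such that ∑_{ℓ > L} γ_ℓ/(ℓ² − L²) ≤ C/L³ · (1 + log L)^{1/2} for all L ≥ 1; in particular ∑_{ℓ > L} γ_ℓ/(ℓ² − L²) = O(L^{−5/2}). -/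
set_option maxHeartbeats 1000000

private lemma basel_le : Summable (fun j : ℕ => 1 / ((j : ℝ) + 1) ^ 2) ∧
    ∑' j : ℕ, 1 / ((j : ℝ) + 1) ^ 2 ≤ 2 := by
  have h := hasSum_zeta_two
  have h1 := (hasSum_nat_add_iff' (f := fun n : ℕ => (1 : ℝ) / (n : ℝ) ^ 2) 1).mpr h
  have heq : (fun n : ℕ => (1 : ℝ) / ((n + 1 : ℕ) : ℝ) ^ 2) = fun n : ℕ => 1 / ((n : ℝ) + 1) ^ 2 := by
    funext n; push_cast; ring
  rw [heq] at h1
  constructor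
  · exact h1.summable
  · rw [h1.tsum_eq]
    have hpi : Real.pi ^ 2 ≤ 10 := by nlinarith [Real.pi_lt_d2, Real.pi_pos]
    have : ∑ i ∈ Finset.range 1, (1 : ℝ) / (i : ℝ) ^ 2 = 0 := by norm_num
    rw [this]
    nlinarith

theorem stmt19 (B : ℝ) (hB : 0 ≤ B) :
    ∃ C > 0, ∀ γ : ℕ → ℝ, (∀ ℓ, 0 ≤ γ ℓ) →
      Summable (fun ℓ : ℕ => ((ℓ : ℝ) ^ 2 * γ ℓ) ^ 2) →
      (∑' ℓ : ℕ, ((ℓ : ℝ) ^ 2 * γ ℓ) ^ 2) ≤ B →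
      ∀ L : ℕ, 1 ≤ L →
        Summable (fun j : ℕ => γ (L + 1 + j) / (((L + 1 + j : ℕ) : ℝ) ^ 2 - (L : ℝ) ^ 2)) ∧
        ∑' j : ℕ, γ (L + 1 + j) / (((L + 1 + j : ℕ) : ℝ) ^ 2 - (L : ℝ) ^ 2) ≤
          C / (L : ℝ) ^ 3 * Real.sqrt (1 + Real.log L) := by
  refine ⟨B + 1, by linarith, ?_⟩
  intro γ hγ hsum htsum L hL
  have hL1 : (1 : ℝ) ≤ (L : ℝ) := by exact_mod_cast hL
  have hLpos : (0 : ℝ) < (L : ℝ) := by linarith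
  have hL3 : (0 : ℝ) < (L : ℝ) ^ 3 := by positivity
  set a : ℕ → ℝ := fun j => ((L + 1 + j : ℕ) : ℝ) ^ 2 * γ (L + 1 + j) with ha
  set b : ℕ → ℝ := fun j => 1 / (((L + 1 + j : ℕ) : ℝ) ^ 2 * (((L + 1 + j : ℕ) : ℝ) ^ 2 - (L : ℝ) ^ 2)) with hb
  have hℓ : ∀ j : ℕ, ((L + 1 + j : ℕ) : ℝ) = (L : ℝ) + 1 + (j : ℝ) := by
    intro j; push_cast; ring
  have hd : ∀ j : ℕ, (0 : ℝ) < ((L + 1 + j : ℕ) : ℝ) ^ 2 - (L : ℝ) ^ 2 := by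
    intro j; rw [hℓ j]; nlinarith [Nat.cast_nonneg (α := ℝ) j]
  have hℓpos : ∀ j : ℕ, (0 : ℝ) < ((L + 1 + j : ℕ) : ℝ) := by
    intro j; rw [hℓ j]; nlinarith [Nat.cast_nonneg (α := ℝ) j]
  have hainj : Function.Injective (fun j : ℕ => L + 1 + j) := fun x y h => by
    simp only at h; omega
  have hasq : Summable (fun j => a j ^ 2) := hsum.comp_injective hainj
  have hasum : ∑' j, a j ^ 2 ≤ B := by
    refine le_trans ?_ htsum
    exact Summable.tsum_le_tsum_of_inj (fun j : ℕ => L + 1 + j) hainj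
      (fun c _ => by positivity) (fun j => le_refl _) hasq hsum
  -- bound on b
  have hbb : ∀ j : ℕ, b j ≤ 1 / (2 * (L : ℝ) ^ 3 * ((j : ℝ) + 1)) := by
    intro j
    have h1 : (0 : ℝ) ≤ (j : ℝ) := Nat.cast_nonneg j
    have h3 : 2 * (L : ℝ) ^ 3 * ((j : ℝ) + 1) ≤
        ((L + 1 + j : ℕ) : ℝ) ^ 2 * (((L + 1 + j : ℕ) : ℝ) ^ 2 - (L : ℝ) ^ 2) := by
      rw [hℓ j]
      set x := (L : ℝ); set y := (j : ℝ)
      have e1 : x ^ 2 ≤ (x + 1 + y) ^ 2 := by nlinarith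
      have e2 : (x + 1 + y) ^ 2 - x ^ 2 = (1 + y) * (2 * x + 1 + y) := by ring
      calc 2 * x ^ 3 * (y + 1) = x ^ 2 * ((y + 1) * (2 * x)) := by ring
        _ ≤ (x + 1 + y) ^ 2 * ((1 + y) * (2 * x + 1 + y)) := by
            apply mul_le_mul e1 (by nlinarith) (by nlinarith) (by nlinarith)
        _ = (x + 1 + y) ^ 2 * ((x + 1 + y) ^ 2 - x ^ 2) := by rw [e2]
    exact one_div_le_one_div_of_le (by positivity) h3
  have hbpos : ∀ j : ℕ, 0 < b j := fun j => by
    have h2 := hd j; have h3 := hℓpos j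
    simp only [hb]; positivity
  have hbsq : ∀ j : ℕ, b j ^ 2 ≤ 1 / (4 * (L : ℝ) ^ 6) * (1 / ((j : ℝ) + 1) ^ 2) := by
    intro j
    have h4 : (0 : ℝ) < (j : ℝ) + 1 := by positivity
    calc b j ^ 2 ≤ (1 / (2 * (L : ℝ) ^ 3 * ((j : ℝ) + 1))) ^ 2 :=
          pow_le_pow_left₀ (hbpos j).le (hbb j) 2
      _ = 1 / (4 * (L : ℝ) ^ 6) * (1 / ((j : ℝ) + 1) ^ 2) := by
          field_simp; ring
  obtain ⟨hbasel, hbaselsum⟩ := basel_le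
  set h : ℕ → ℝ := fun j => a j ^ 2 / (2 * (L : ℝ) ^ 3) + (L : ℝ) ^ 3 / 2 *
      (1 / (4 * (L : ℝ) ^ 6) * (1 / ((j : ℝ) + 1) ^ 2)) with hh
  have hs2 : Summable (fun j : ℕ => (L : ℝ) ^ 3 / 2 *
      (1 / (4 * (L : ℝ) ^ 6) * (1 / ((j : ℝ) + 1) ^ 2))) :=
    (hbasel.mul_left _).mul_left _
  have hhsum : Summable h := (hasq.div_const _).add hs2
  have hterm_eq : ∀ j : ℕ, γ (L + 1 + j) / (((L + 1 + j : ℕ) : ℝ) ^ 2 - (L : ℝ) ^ 2)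
      = a j * b j := by
    intro j
    have h3 := (hℓpos j).ne'
    simp only [ha, hb]
    rw [mul_one_div, mul_div_mul_left _ _ (pow_ne_zero 2 h3)]
  have hterm_nonneg : ∀ j : ℕ, 0 ≤ γ (L + 1 + j) / (((L + 1 + j : ℕ) : ℝ) ^ 2 - (L : ℝ) ^ 2) :=
    fun j => div_nonneg (hγ _) (hd j).le
  have hterm_le : ∀ j : ℕ, γ (L + 1 + j) / (((L + 1 + j : ℕ) : ℝ) ^ 2 - (L : ℝ) ^ 2) ≤ h j := by
    intro j
    rw [hterm_eq j]
    have amgm : a j * b j ≤ (a j ^ 2 + (L : ℝ) ^ 6 * b j ^ 2) / (2 * (L : ℝ) ^ 3) := by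
      rw [le_div_iff₀ (by positivity)]
      nlinarith [sq_nonneg (a j - (L : ℝ) ^ 3 * b j)]
    have hsplit : (a j ^ 2 + (L : ℝ) ^ 6 * b j ^ 2) / (2 * (L : ℝ) ^ 3)
        = a j ^ 2 / (2 * (L : ℝ) ^ 3) + (L : ℝ) ^ 3 / 2 * b j ^ 2 := by
      field_simp
    have hbound : (L : ℝ) ^ 3 / 2 * b j ^ 2 ≤ (L : ℝ) ^ 3 / 2 *
        (1 / (4 * (L : ℝ) ^ 6) * (1 / ((j : ℝ) + 1) ^ 2)) :=
      mul_le_mul_of_nonneg_left (hbsq j) (by positivity)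
    rw [hsplit] at amgm
    simp only [hh]
    linarith
  have hsummable : Summable (fun j : ℕ => γ (L + 1 + j) / (((L + 1 + j : ℕ) : ℝ) ^ 2 - (L : ℝ) ^ 2)) :=
    Summable.of_nonneg_of_le hterm_nonneg hterm_le hhsum
  refine ⟨hsummable, ?_⟩
  have step1 : ∑' j, γ (L + 1 + j) / (((L + 1 + j : ℕ) : ℝ) ^ 2 - (L : ℝ) ^ 2) ≤ ∑' j, h j :=
    Summable.tsum_le_tsum hterm_le hsummable hhsum
  have step2 : ∑' j, h j ≤ B / (2 * (L : ℝ) ^ 3) + 1 / (4 * (L : ℝ) ^ 3) := by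
    rw [hh, Summable.tsum_add (hasq.div_const _) hs2]
    have t1 : ∑' j, a j ^ 2 / (2 * (L : ℝ) ^ 3) ≤ B / (2 * (L : ℝ) ^ 3) := by
      rw [tsum_div_const]
      exact (div_le_div_iff_of_pos_right (by positivity)).mpr hasum
    have t2 : ∑' j : ℕ, (L : ℝ) ^ 3 / 2 * (1 / (4 * (L : ℝ) ^ 6) * (1 / ((j : ℝ) + 1) ^ 2))
        ≤ 1 / (4 * (L : ℝ) ^ 3) := by
      rw [tsum_mul_left, tsum_mul_left]
      have hc : (L : ℝ) ^ 3 / 2 * (1 / (4 * (L : ℝ) ^ 6)) = 1 / (8 * (L : ℝ) ^ 3) := by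
        field_simp; ring
      rw [← mul_assoc, hc]
      calc 1 / (8 * (L : ℝ) ^ 3) * (∑' j : ℕ, 1 / ((j : ℝ) + 1) ^ 2)
          ≤ 1 / (8 * (L : ℝ) ^ 3) * 2 := mul_le_mul_of_nonneg_left hbaselsum (by positivity)
        _ = 1 / (4 * (L : ℝ) ^ 3) := by field_simp; ring
    exact add_le_add t1 t2
  have hsqrt : 1 ≤ Real.sqrt (1 + Real.log L) := by
    rw [Real.one_le_sqrt]
    have := Real.log_nonneg hL1
    linarith
  have hlhs : B / (2 * (L : ℝ) ^ 3) + 1 / (4 * (L : ℝ) ^ 3) ≤ (B + 1) / (L : ℝ) ^ 3 := by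
    rw [div_add_div _ _ (by positivity) (by positivity),
      div_le_div_iff₀ (by positivity) (by positivity)]
    have h6 : (0 : ℝ) < (L : ℝ) ^ 3 * (L : ℝ) ^ 3 := mul_pos hL3 hL3
    nlinarith [mul_nonneg hB h6.le, h6]
  have step3 : (B + 1) / (L : ℝ) ^ 3 ≤ (B + 1) / (L : ℝ) ^ 3 * Real.sqrt (1 + Real.log L) := by
    nth_rewrite 1 [← mul_one ((B + 1) / (L : ℝ) ^ 3)]
    exact mul_le_mul_of_nonneg_left hsqrt (by positivity)
  linarith
end
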